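/- arXiv:1311.1861 — 2 statements merged into one kernel-verified Lean document; each statement's English description precedes it below -/
import Mathlib

section
/- For δ, μ ∈ (0,1) and p ∈ (0,1/2), the left derivative of g at 1 equals g'(1) = 2(1-δ)[2μ(1-p)∑_{k=0}^∞ (2p)^k + (1-μ)] = 2(1-δ)(1 + μ - 2p)/(1 - 2p), where g(s) = (δ + (1-δ)[μ(1-p)∑_{k=1}^∞ s^{2^k} p^{k-1} + (1-μ)s])². -/
/-!
For `s < 1` the slope of `∑ a_k s^{n_k}` between `s` and `1` is `∑ a_k (1 + s + ⋯ + s^{n_k - 1})`,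
whose `k`-th term is bounded by `|a_k| n_k` on `(0, 1)`. Tannery's theorem (dominated convergence
for series) therefore lets the slope tend to `∑ a_k n_k`, which for `a_k = p^k`, `n_k = 2^{k+1}` is
`2/(1 - 2p)`; the chain rule does the rest.
-/

open Set Filter Topology

theorem hasDerivWithinAt_tsum_mul_pow_Iic_one {ι : Type*} {a : ι → ℝ} {n : ι → ℕ}
    (ha : Summable a) (han : Summable fun k => a k * n k) :
    HasDerivWithinAt (fun s : ℝ => ∑' k, a k * s ^ n k) (∑' k, a k * n k) (Iic 1) 1 := by
  rw [hasDerivWithinAt_iff_tendsto_slope, Iic_sdiff_right]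
  have hIoo : ∀ᶠ s in 𝓝[<] (1 : ℝ), s ∈ Ioo 0 1 := Ioo_mem_nhdsLT zero_lt_one
  have hdiff : Tendsto (fun s : ℝ => ∑' k, a k * ∑ j ∈ Finset.range (n k), s ^ j)
      (𝓝[<] 1) (𝓝 (∑' k, a k * n k)) := by
    refine tendsto_tsum_of_dominated_convergence (bound := fun k => |a k * n k|) han.abs
      (fun k => ?_) ?_
    · have : Continuous fun s : ℝ => a k * ∑ j ∈ Finset.range (n k), s ^ j := by fun_prop
      simpa using this.continuousWithinAt.tendsto (x := 1) (s := Iio 1)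
    · filter_upwards [hIoo] with s hs k
      have hgeom : ∑ j ∈ Finset.range (n k), s ^ j ≤ n k := by
        simpa using Finset.sum_le_sum fun j (_ : j ∈ Finset.range (n k)) =>
          pow_le_one₀ hs.1.le hs.2.le
      rw [Real.norm_eq_abs, abs_mul, abs_mul, Nat.abs_cast,
        abs_of_nonneg (Finset.sum_nonneg fun j _ => pow_nonneg hs.1.le j)]
      gcongr
  refine hdiff.congr' ?_
  filter_upwards [hIoo] with s hs
  have hsum : ∀ x : ℝ, |x| ≤ 1 → Summable fun k => a k * x ^ n k := fun x hx =>
    ha.abs.of_norm_bounded fun k => by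
      rw [Real.norm_eq_abs, abs_mul, abs_pow]
      exact mul_le_of_le_one_right (abs_nonneg _) (pow_le_one₀ (abs_nonneg x) hx)
  rw [slope_def_field, ← (hsum s (abs_le.2 ⟨by linarith [hs.1], hs.2.le⟩)).tsum_sub
    (hsum 1 (by simp)), ← tsum_div_const]
  refine tsum_congr fun k => ?_
  rw [geom_sum_eq hs.2.ne, one_pow]
  ring

theorem hasDerivWithinAt_tsum_pow_two_pow_mul_pow_Iic_one {p : ℝ} (hp : |p| < 1 / 2) :
    HasDerivWithinAt (fun s : ℝ => ∑' k : ℕ, s ^ 2 ^ (k + 1) * p ^ k) (2 / (1 - 2 * p))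
      (Iic 1) 1 := by
  have h2p : |2 * p| < 1 := by rw [abs_mul, abs_two]; linarith
  have hcoef : ∀ k : ℕ, p ^ k * ((2 ^ (k + 1) : ℕ) : ℝ) = 2 * (2 * p) ^ k := fun k => by
    push_cast; ring
  have hderiv := hasDerivWithinAt_tsum_mul_pow_Iic_one (a := fun k => p ^ k)
    (n := fun k => 2 ^ (k + 1))
    (summable_geometric_of_abs_lt_one (by linarith))
    (by simpa only [hcoef] using (summable_geometric_of_abs_lt_one h2p).mul_left 2)
  simp only [hcoef, tsum_mul_left, tsum_geometric_of_abs_lt_one h2p] at hderiv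
  convert hderiv using 1
  · exact funext fun s => tsum_congr fun k => mul_comm _ _
  · rw [div_eq_mul_inv]

theorem g_left_deriv_at_one_general (δ μ p : ℝ) (hp : p ∈ Set.Ioo (0:ℝ) (1/2))
    (g : ℝ → ℝ)
    (hg : ∀ s, g s =
      (δ + (1 - δ) * (μ * (1 - p) * (∑' k : ℕ, s ^ (2 ^ (k + 1)) * p ^ k)
        + (1 - μ) * s)) ^ 2) :
    HasDerivWithinAt g (2 * (1 - δ) * (1 + μ - 2 * p) / (1 - 2 * p))
        (Set.Iic 1) 1 ∧
    2 * (1 - δ) * (2 * μ * (1 - p) * (∑' k : ℕ, (2 * p) ^ k) + (1 - μ))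
      = 2 * (1 - δ) * (1 + μ - 2 * p) / (1 - 2 * p) := by
  obtain ⟨hp0, hp2⟩ := hp
  have h1p : 1 - p ≠ 0 := by linarith
  have h12p : 1 - 2 * p ≠ 0 := by linarith
  have hF := hasDerivWithinAt_tsum_pow_two_pow_mul_pow_Iic_one (abs_lt.2 ⟨by linarith, hp2⟩)
  have hF1 : ∑' k : ℕ, (1 : ℝ) ^ 2 ^ (k + 1) * p ^ k = (1 - p)⁻¹ := by
    simpa using tsum_geometric_of_lt_one hp0.le (by linarith)
  have hcomp := ((((hF.const_mul (μ * (1 - p))).add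
    ((hasDerivWithinAt_id 1 (Iic 1)).const_mul (1 - μ))).const_mul (1 - δ)).const_add δ).pow 2
  refine ⟨?_, ?_⟩
  · refine (hcomp.congr (fun s _ => hg s) (hg 1)).congr_deriv ?_
    simp only [Pi.add_apply, id, hF1, Nat.cast_ofNat, Nat.add_one_sub_one, pow_one, mul_one]
    field_simp
    ring
  · rw [tsum_geometric_of_lt_one (by linarith) (by linarith)]
    field_simp
    ring

/-- For `δ, μ ∈ (0,1)` and `p ∈ (0,1/2)`, the left derivative of
`g(s) = (δ + (1-δ)[μ(1-p)∑_{k=1}^∞ s^(2^k) p^(k-1) + (1-μ)s])²` at `1` equals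
`2(1-δ)[2μ(1-p)∑_{k=0}^∞ (2p)^k + (1-μ)] = 2(1-δ)(1+μ-2p)/(1-2p)`. -/
theorem g_left_deriv_at_one (δ μ p : ℝ) (hδ : δ ∈ Set.Ioo (0:ℝ) 1)
    (hμ : μ ∈ Set.Ioo (0:ℝ) 1) (hp : p ∈ Set.Ioo (0:ℝ) (1/2))
    (g : ℝ → ℝ)
    (hg : ∀ s, g s =
      (δ + (1 - δ) * (μ * (1 - p) * (∑' k : ℕ, s ^ (2 ^ (k + 1)) * p ^ k)
        + (1 - μ) * s)) ^ 2) :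
    HasDerivWithinAt g (2 * (1 - δ) * (1 + μ - 2 * p) / (1 - 2 * p))
        (Set.Iic 1) 1 ∧
    2 * (1 - δ) * (2 * μ * (1 - p) * (∑' k : ℕ, (2 * p) ^ k) + (1 - μ))
      = 2 * (1 - δ) * (1 + μ - 2 * p) / (1 - 2 * p) :=
  g_left_deriv_at_one_general δ μ p hp g hg
end

section
/- For δ, μ ∈ (0,1) and p ∈ [1/2, 1), the function g(s) = (δ + (1-δ)[μ(1-p)∑_{k=1}^∞ s^{2^k} p^{k-1} + (1-μ)s])² has a fixed point s₀ ∈ (0,1). -/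
private lemma bern (ε : ℝ) (n : ℕ) (hε0 : 0 < ε) (hε1 : ε ≤ 1) (hn : (n:ℝ) * ε ≤ 1) :
    (1 - ε) ^ n ≤ 1 - (n:ℝ) * ε / 2 := by
  have hC : (1:ℝ) + n * ε ≤ (1 + ε) ^ n := by
    have := one_add_mul_le_pow (a := ε) (by linarith) n
    linarith
  have hB : ((1 - ε) * (1 + ε)) ^ n ≤ 1 :=
    pow_le_one₀ (mul_nonneg (by linarith) (by linarith)) (by nlinarith [sq_nonneg ε])
  have hA0 : (0:ℝ) ≤ (1 - ε) ^ n := pow_nonneg (by linarith) n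
  have hmul : (1 - ε) ^ n * (1 + ε) ^ n ≤ 1 := by
    rw [← mul_pow]; exact hB
  have hn0 : (0:ℝ) ≤ (n:ℝ) * ε := by positivity
  nlinarith [mul_le_mul_of_nonneg_left hC hA0]

set_option maxHeartbeats 2000000 in
/-- For `δ, μ ∈ (0,1)` and `p ∈ [1/2, 1)`, the function
`g(s) = (δ + (1-δ)[μ(1-p)∑_{k=1}^∞ s^(2^k) p^(k-1) + (1-μ)s])²`
has a fixed point `s₀ ∈ (0,1)`. -/
theorem g_fixed_point_supercritical_p (δ μ p : ℝ) (hδ : δ ∈ Set.Ioo (0:ℝ) 1)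
    (hμ : μ ∈ Set.Ioo (0:ℝ) 1) (hp : p ∈ Set.Ico (1/2 : ℝ) 1)
    (g : ℝ → ℝ)
    (hg : ∀ s, g s =
      (δ + (1 - δ) * (μ * (1 - p) * (∑' k : ℕ, s ^ (2 ^ (k + 1)) * p ^ k)
        + (1 - μ) * s)) ^ 2) :
    ∃ s₀ ∈ Set.Ioo (0:ℝ) 1, g s₀ = s₀ := by
  obtain ⟨hδ0, hδ1⟩ := hδ
  obtain ⟨hμ0, hμ1⟩ := hμ
  obtain ⟨hp0, hp1⟩ := hp
  have hp0' : (0:ℝ) ≤ p := by linarith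
  -- geometric summability
  have hgeo : Summable (fun k : ℕ => p ^ k) := summable_geometric_of_lt_one hp0' hp1
  have hsum : ∀ s : ℝ, |s| ≤ 1 → Summable (fun k : ℕ => s ^ (2 ^ (k + 1)) * p ^ k) := by
    intro s hs
    apply Summable.of_norm
    apply hgeo.of_nonneg_of_le (fun k => norm_nonneg _)
    intro k
    rw [Real.norm_eq_abs, abs_mul, abs_pow, abs_pow]
    calc |s| ^ 2 ^ (k+1) * |p| ^ k ≤ 1 ^ 2 ^ (k+1) * |p| ^ k := by
          apply mul_le_mul_of_nonneg_right (pow_le_pow_left₀ (abs_nonneg _) hs _) (by positivity)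
      _ = p ^ k := by rw [one_pow, one_mul, abs_of_nonneg hp0']
  set T : ℝ → ℝ := fun s => ∑' k : ℕ, s ^ (2 ^ (k + 1)) * p ^ k with hT
  -- T(1) = 1/(1-p)
  have hT1 : T 1 = (1 - p)⁻¹ := by
    simp only [hT, one_pow, one_mul]
    exact tsum_geometric_of_lt_one hp0' hp1
  -- choose K and s₁
  set C : ℝ := ((1 - δ) * μ * (1 - p))⁻¹ with hC
  have hCpos : 0 < (1 - δ) * μ * (1 - p) :=
    mul_pos (mul_pos (by linarith) hμ0) (by linarith)
  set K : ℕ := ⌈C⌉₊ + 1 with hK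
  have hKC : C < (K:ℝ) := by
    calc C ≤ (⌈C⌉₊ : ℝ) := Nat.le_ceil C
      _ < (K:ℝ) := by rw [hK]; push_cast; linarith
  set ε : ℝ := (1/2 : ℝ) ^ K with hε
  have hε0 : 0 < ε := by positivity
  have hε1 : ε < 1 := by
    apply pow_lt_one₀ (by norm_num) (by norm_num)
    omega
  set s₁ : ℝ := 1 - ε with hs₁
  have hs₁0 : 0 < s₁ := by simp [hs₁]; linarith
  have hs₁1 : s₁ < 1 := by simp [hs₁]; linarith
  -- lower bound on each term of D for k < K
  have hterm : ∀ k < K, ε ≤ (1 - s₁ ^ (2 ^ (k+1))) * p ^ k := by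
    intro k hk
    have hnε : ((2:ℝ) ^ (k+1)) * ε ≤ 1 := by
      rw [hε, div_pow, one_pow, mul_one_div, div_le_one (by positivity)]
      exact pow_le_pow_right₀ one_le_two (by omega)
    have h1 : (1 - ε) ^ (2^(k+1)) ≤ 1 - ((2:ℝ)^(k+1)) * ε / 2 := by
      have := bern ε (2^(k+1)) hε0 (le_of_lt hε1) (by push_cast; exact hnε)
      push_cast at this
      exact this
    have h2 : ((2:ℝ)^(k+1)) * ε / 2 = 2^k * ε := by rw [pow_succ]; ring
    have h3 : (1:ℝ) ≤ (2*p)^k := one_le_pow₀ (by linarith)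
    have h4 : ((2:ℝ)*p)^k = 2^k * p^k := mul_pow 2 p k
    have hpk : (0:ℝ) < p ^ k := by positivity
    have h5 : 2^k * ε ≤ (1 - s₁ ^ (2^(k+1))) := by
      rw [hs₁]; linarith
    calc ε = ε * 1 := by ring
      _ ≤ ε * (2^k * p^k) := by
          apply mul_le_mul_of_nonneg_left _ (le_of_lt hε0)
          rw [← h4]; exact h3
      _ = (2^k * ε) * p^k := by ring
      _ ≤ (1 - s₁ ^ (2^(k+1))) * p^k := by
          apply mul_le_mul_of_nonneg_right h5 (le_of_lt hpk)
  -- D = T 1 - T s₁ ≥ K ε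
  have hs₁abs : |s₁| ≤ 1 := by rw [abs_of_nonneg (le_of_lt hs₁0)]; linarith
  have hsum1 : Summable (fun k : ℕ => s₁ ^ (2 ^ (k + 1)) * p ^ k) := hsum s₁ hs₁abs
  have hDsum : Summable (fun k : ℕ => (1 - s₁ ^ (2 ^ (k + 1))) * p ^ k) := by
    have : (fun k : ℕ => (1 - s₁ ^ (2 ^ (k + 1))) * p ^ k)
        = fun k => p ^ k - s₁ ^ (2 ^ (k + 1)) * p ^ k := by funext k; ring
    rw [this]; exact hgeo.sub hsum1
  have hDval : ∑' k : ℕ, (1 - s₁ ^ (2 ^ (k + 1))) * p ^ k = T 1 - T s₁ := by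
    have : (fun k : ℕ => (1 - s₁ ^ (2 ^ (k + 1))) * p ^ k)
        = fun k => p ^ k - s₁ ^ (2 ^ (k + 1)) * p ^ k := by funext k; ring
    rw [this, Summable.tsum_sub hgeo hsum1]
    congr 1
    simp [hT]
  have hDterm_nonneg : ∀ k : ℕ, 0 ≤ (1 - s₁ ^ (2 ^ (k + 1))) * p ^ k := by
    intro k
    apply mul_nonneg _ (by positivity)
    have : s₁ ^ (2^(k+1)) ≤ 1 := pow_le_one₀ (le_of_lt hs₁0) (le_of_lt hs₁1)
    linarith
  have hDge : (K:ℝ) * ε ≤ T 1 - T s₁ := by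
    rw [← hDval]
    calc (K:ℝ) * ε = ∑ _k ∈ Finset.range K, ε := by
          rw [Finset.sum_const, Finset.card_range, nsmul_eq_mul]
      _ ≤ ∑ k ∈ Finset.range K, (1 - s₁ ^ (2 ^ (k + 1))) * p ^ k := by
          apply Finset.sum_le_sum
          intro k hk
          exact hterm k (Finset.mem_range.mp hk)
      _ ≤ ∑' k : ℕ, (1 - s₁ ^ (2 ^ (k + 1))) * p ^ k :=
          Summable.sum_le_tsum _ (fun k _ => hDterm_nonneg k) hDsum
  -- g s₁ < s₁
  have hTs₁nonneg : 0 ≤ T s₁ := tsum_nonneg (fun k => by positivity)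
  have hKε : ε < (1 - δ) * μ * (1 - p) * ((K:ℝ) * ε) := by
    have : 1 < (1 - δ) * μ * (1 - p) * (K:ℝ) := by
      rw [hC] at hKC
      calc (1:ℝ) = ((1 - δ) * μ * (1 - p)) * ((1 - δ) * μ * (1 - p))⁻¹ :=
            (mul_inv_cancel₀ (ne_of_gt hCpos)).symm
        _ < ((1 - δ) * μ * (1 - p)) * (K:ℝ) := by
            exact mul_lt_mul_of_pos_left hKC hCpos
    nlinarith
  have hf_lt : δ + (1 - δ) * (μ * (1 - p) * T s₁ + (1 - μ) * s₁) < s₁ := by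
    have hD : (1 - δ) * μ * (1 - p) * ((K:ℝ)*ε) ≤ (1 - δ) * μ * (1 - p) * (T 1 - T s₁) :=
      mul_le_mul_of_nonneg_left hDge (le_of_lt hCpos)
    have hT1' : μ * (1 - p) * T 1 = μ := by
      rw [hT1, mul_assoc, mul_inv_cancel₀ (by linarith : (1:ℝ) - p ≠ 0), mul_one]
    have key : ε < (1 - δ) * (μ * (1 - p) * (T 1 - T s₁)) := by
      calc ε < (1 - δ) * μ * (1 - p) * ((K:ℝ)*ε) := hKε
        _ ≤ (1 - δ) * μ * (1 - p) * (T 1 - T s₁) := hD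
        _ = (1 - δ) * (μ * (1 - p) * (T 1 - T s₁)) := by ring
    have hexp : μ * (1 - p) * (T 1 - T s₁) = μ - μ * (1 - p) * T s₁ := by
      rw [mul_sub, hT1']
    have h6 : 0 ≤ (1 - δ) * (1 - μ) * (1 - s₁) :=
      mul_nonneg (mul_nonneg (by linarith) (by linarith)) (by linarith)
    rw [hexp] at key
    nlinarith [key, h6]
  have hf_nonneg : 0 ≤ δ + (1 - δ) * (μ * (1 - p) * T s₁ + (1 - μ) * s₁) := by
    have t1 : 0 ≤ μ * (1 - p) * T s₁ :=
      mul_nonneg (mul_nonneg hμ0.le (by linarith)) hTs₁nonneg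
    have t2 : 0 ≤ (1 - μ) * s₁ := mul_nonneg (by linarith) hs₁0.le
    have t3 : 0 ≤ (1 - δ) * (μ * (1 - p) * T s₁ + (1 - μ) * s₁) :=
      mul_nonneg (by linarith) (by linarith)
    linarith
  have hgs₁ : g s₁ < s₁ := by
    rw [hg]
    calc (δ + (1 - δ) * (μ * (1 - p) * T s₁ + (1 - μ) * s₁))^2 < s₁^2 := by
          apply sq_lt_sq' _ hf_lt
          linarith
      _ ≤ s₁ := by nlinarith
  -- continuity of g on [0, s₁]
  have hTcont : ContinuousOn T (Set.Icc (-1:ℝ) 1) := by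
    apply continuousOn_tsum (u := fun k => p ^ k)
    · intro k
      exact ((continuous_pow _).mul continuous_const).continuousOn
    · exact hgeo
    · intro k x hx
      rw [Real.norm_eq_abs, abs_mul, abs_pow, abs_pow]
      have hxabs : |x| ≤ 1 := abs_le.mpr ⟨hx.1, hx.2⟩
      calc |x| ^ 2 ^ (k+1) * |p| ^ k ≤ 1 ^ 2 ^ (k+1) * |p| ^ k := by
            apply mul_le_mul_of_nonneg_right (pow_le_pow_left₀ (abs_nonneg _) hxabs _) (by positivity)
        _ = p ^ k := by rw [one_pow, one_mul, abs_of_nonneg hp0']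
  have hgcont : ContinuousOn g (Set.Icc (0:ℝ) s₁) := by
    have : g = fun s => (δ + (1 - δ) * (μ * (1 - p) * T s + (1 - μ) * s)) ^ 2 := by
      funext s; rw [hg]
    rw [this]
    apply ContinuousOn.pow
    apply ContinuousOn.add continuousOn_const
    apply ContinuousOn.mul continuousOn_const
    apply ContinuousOn.add
    · apply ContinuousOn.mul continuousOn_const
      exact hTcont.mono (fun x hx => ⟨by linarith [hx.1], by linarith [hx.2, hs₁1]⟩)
    · exact (continuous_const.mul continuous_id).continuousOn
  -- IVT on h = g - s
  have hcont : ContinuousOn (fun s => g s - s) (Set.Icc (0:ℝ) s₁) :=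
    hgcont.sub continuousOn_id
  have hg0 : 0 < g 0 - 0 := by
    rw [hg]
    have hz : (∑' k : ℕ, (0:ℝ) ^ (2 ^ (k + 1)) * p ^ k) = 0 := by
      simp [zero_pow]
    rw [hz]
    have h0 : δ + (1 - δ) * (μ * (1 - p) * 0 + (1 - μ) * 0) = δ := by ring
    rw [h0]
    have : (0:ℝ) < δ ^ 2 := pow_pos hδ0 2
    linarith
  have : (0:ℝ) ∈ Set.Icc (g s₁ - s₁) (g 0 - 0) := ⟨by linarith, le_of_lt hg0⟩
  have hivt := intermediate_value_Icc' (le_of_lt hs₁0) hcont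
  obtain ⟨s₀, hs₀mem, hs₀⟩ := hivt this
  refine ⟨s₀, ⟨?_, ?_⟩, by linarith [sub_eq_zero.mp hs₀]⟩
  · -- s₀ > 0 since g s₀ = s₀ ≥ δ² > 0
    have hgs₀ : g s₀ = s₀ := by linarith [sub_eq_zero.mp hs₀]
    have hTs₀ : 0 ≤ T s₀ := tsum_nonneg (fun k =>
      mul_nonneg (pow_nonneg hs₀mem.1 _) (pow_nonneg hp0' _))
    have hsq : δ^2 ≤ g s₀ := by
      rw [hg]
      have h1 : 0 ≤ μ * (1 - p) * T s₀ + (1 - μ) * s₀ :=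
        add_nonneg (mul_nonneg (mul_nonneg hμ0.le (by linarith)) hTs₀)
          (mul_nonneg (by linarith) hs₀mem.1)
      have h2 : δ ≤ δ + (1 - δ) * (μ * (1 - p) * T s₀ + (1 - μ) * s₀) := by
        nlinarith [mul_nonneg (by linarith : (0:ℝ) ≤ 1 - δ) h1]
      exact pow_le_pow_left₀ hδ0.le h2 2
    have : (0:ℝ) < δ ^ 2 := pow_pos hδ0 2
    linarith
  · linarith [hs₀mem.2]
end
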